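/- Let n ≥ 3, M be positive integers, A = 6M - n(n+1)(n+5), and R(n,M) the explicit degree-6 polynomial in M. If M³(n-1)²(n+4)⁴A⁷/(54·n⁴(n+1)²·R(n,M)) is a nonzero integer, then n + 1 divides 2⁹·3¹¹·M¹⁰. -/
import Mathlib
set_option maxHeartbeats 2000000
set_option maxRecDepth 8000


theorem stmt (n M : ℤ) (hn : 3 ≤ n) (hM : 0 < M)
    (A : ℤ) (hA : A = 6*M - n*(n+1)*(n+5))
    (R : ℤ) (hR : R = 2^14*3^6*M^6 - 2^13*3^7*n*(n+1)*(n+3)*M^5 + 2^9*3^5*n^2*(n+1)*(n^4+93*n^3+629*n^2+1339*n+818)*M^4 - 2^7*3^4*n^3*(n+1)^2*(13*n^5+436*n^4+3688*n^3+12782*n^2+19163*n+9998)*M^3 + 2^2*3^3*n^4*(n+1)^3*(n+2)*(n+7)^2*(5*n^4+447*n^3+3303*n^2+7873*n+5652)*M^2 - 2^2*3^3*n^5*(n+1)^4*(n+2)^2*(n+5)^2*(n+7)^3*(3*n+5)*M + n^6*(n+1)^5*(n+2)^3*(n+5)^3*(n+7)^4)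
    (hint : ∃ k : ℤ, k ≠ 0 ∧
      ((M^3*(n-1)^2*(n+4)^4*A^7 : ℚ) / (54*n^4*(n+1)^2*R) = (k : ℚ))) :
    (n + 1) ∣ 2^9 * 3^11 * M^10 := by
  obtain ⟨k, hk0, hk⟩ := hint
  have hd : ((54*n^4*(n+1)^2*R : ℤ) : ℚ) ≠ 0 := by
    intro h
    rw [show ((54*n^4*(n+1)^2*R : ℤ) : ℚ) = ((54:ℚ)*n^4*(n+1)^2*R) by push_cast; ring] at h
    rw [h, div_zero] at hk
    exact hk0 (by exact_mod_cast hk.symm)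
  have hdq : ((54:ℚ)*n^4*(n+1)^2*R) ≠ 0 := by
    intro h; apply hd; push_cast; rw [show ((54:ℚ)*(n:ℚ)^4*((n:ℚ)+1)^2*(R:ℚ)) = ((54:ℚ)*n^4*(n+1)^2*R) from rfl]; exact h
  have heq : (M:ℚ)^3*(n-1)^2*(n+4)^4*A^7 = k * (54*n^4*(n+1)^2*R) := by
    rw [div_eq_iff hdq] at hk; exact hk
  have heqz : M^3*(n-1)^2*(n+4)^4*A^7 = k * (54*n^4*(n+1)^2*R) := by
    exact_mod_cast heq
  have h1 : (n+1) ∣ M^3*(n-1)^2*(n+4)^4*A^7 := by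
    rw [heqz]; exact ⟨k * (54*n^4*(n+1)*R), by ring⟩
  have h2 : M^3*(n-1)^2*(n+4)^4*A^7 = 2^9*3^11*M^10 - (n+1) * ((19035648*M^10) + (418037760*n^1*M^9) + (52627968*n^1*M^10) + (-1045094400*n^2*M^8) + (-334430208*n^2*M^9) + (-7838208*n^2*M^10) + (1451520000*n^3*M^7) + (-418037760*n^3*M^8) + (-344881152*n^3*M^9) + (-14556672*n^3*M^10) + (-1209600000*n^4*M^6) + (2322432000*n^4*M^7) + (1656474624*n^4*M^8) + (78382080*n^4*M^9) + (-3639168*n^4*M^10) + (604800000*n^5*M^5) + (-3386880000*n^5*M^6) + (-1313625600*n^5*M^7) + (1005903360*n^5*M^8) + (132269760*n^5*M^9) + (-279936*n^5*M^10) + (-168000000*n^6*M^4) + (2419200000*n^6*M^5) + (-1469664000*n^6*M^6) + (-4041757440*n^6*M^7) + (-393380064*n^6*M^8) + (44089920*n^6*M^9) + (20000000*n^7*M^3) + (-873600000*n^7*M^4) + (2887920000*n^7*M^5) + (4294684800*n^7*M^6) + (-1590276240*n^7*M^7) + (-546225120*n^7*M^8) + (6205248*n^7*M^9) + (128000000*n^8*M^3)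 + (-1642200000*n^8*M^4) + (-926856000*n^8*M^5) + (5585925240*n^8*M^6) + (1134861840*n^8*M^7) + (-213917760*n^8*M^8) + (326592*n^8*M^9) + (324300000*n^9*M^3) + (-839580000*n^9*M^4) + (-5222807100*n^9*M^5) + (1318184280*n^9*M^6) + (1316755440*n^9*M^7) + (-41477184*n^9*M^8) + (355350000*n^10*M^3) + (1599291750*n^10*M^4) + (-4440115764*n^10*M^5) + (-1967112000*n^10*M^6) + (565866000*n^10*M^7) + (-4082400*n^10*M^8) + (-31351875*n^11*M^3) + (3025793190*n^11*M^4) + (-365947092*n^11*M^5) + (-1977454080*n^11*M^6) + (134220240*n^11*M^7) + (-163296*n^11*M^8) + (-568693725*n^12*M^3) + (1871846508*n^12*M^4) + (2037175812*n^12*M^5) + (-897175440*n^12*M^6) + (18552240*n^12*M^7) + (-693173415*n^13*M^3) + (-197226708*n^13*M^4) + (1831771368*n^13*M^5) + (-243991440*n^13*M^6) + (1406160*n^13*M^7) + (-315969969*n^14*M^3) + (-1167553590*n^14*M^4) + (858046392*n^14*M^5) + (-42094080*n^14*M^6) + (45360*n^14*M^7) + (122601945*n^15*M^3) + (-962113110*n^15*M^4)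 + (257159448*n^15*M^5) + (-4536000*n^15*M^6) + (286026519*n^16*M^3) + (-459213720*n^16*M^4) + (51923592*n^16*M^5) + (-279720*n^16*M^6) + (219911925*n^17*M^3) + (-147812280*n^17*M^4) + (7070868*n^17*M^5) + (-7560*n^17*M^6) + (106106115*n^18*M^3) + (-33558630*n^18*M^4) + (625212*n^18*M^5) + (36044775*n^19*M^3) + (-5415270*n^19*M^4) + (32508*n^19*M^5) + (8958105*n^20*M^3) + (-610260*n^20*M^4) + (756*n^20*M^5) + (1645275*n^21*M^3) + (-45780*n^21*M^4) + (221565*n^22*M^3) + (-2058*n^22*M^4) + (21315*n^23*M^3) + (-42*n^23*M^4) + (1389*n^24*M^3) + (55*n^25*M^3) + (1*n^26*M^3)) := by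
    subst hA; ring
  rw [h2] at h1
  have := dvd_add h1 (Dvd.intro ((19035648*M^10) + (418037760*n^1*M^9) + (52627968*n^1*M^10) + (-1045094400*n^2*M^8) + (-334430208*n^2*M^9) + (-7838208*n^2*M^10) + (1451520000*n^3*M^7) + (-418037760*n^3*M^8) + (-344881152*n^3*M^9) + (-14556672*n^3*M^10) + (-1209600000*n^4*M^6) + (2322432000*n^4*M^7) + (1656474624*n^4*M^8) + (78382080*n^4*M^9) + (-3639168*n^4*M^10) + (604800000*n^5*M^5) + (-3386880000*n^5*M^6) + (-1313625600*n^5*M^7) + (1005903360*n^5*M^8) + (132269760*n^5*M^9) + (-279936*n^5*M^10) + (-168000000*n^6*M^4) + (2419200000*n^6*M^5) + (-1469664000*n^6*M^6) + (-4041757440*n^6*M^7) + (-393380064*n^6*M^8) + (44089920*n^6*M^9) + (20000000*n^7*M^3) + (-873600000*n^7*M^4) + (2887920000*n^7*M^5) + (4294684800*n^7*M^6) + (-1590276240*n^7*M^7) + (-546225120*n^7*M^8) + (6205248*n^7*M^9) + (128000000*n^8*M^3) + (-1642200000*n^8*M^4) + (-926856000*n^8*M^5) + (5585925240*n^8*M^6)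 + (1134861840*n^8*M^7) + (-213917760*n^8*M^8) + (326592*n^8*M^9) + (324300000*n^9*M^3) + (-839580000*n^9*M^4) + (-5222807100*n^9*M^5) + (1318184280*n^9*M^6) + (1316755440*n^9*M^7) + (-41477184*n^9*M^8) + (355350000*n^10*M^3) + (1599291750*n^10*M^4) + (-4440115764*n^10*M^5) + (-1967112000*n^10*M^6) + (565866000*n^10*M^7) + (-4082400*n^10*M^8) + (-31351875*n^11*M^3) + (3025793190*n^11*M^4) + (-365947092*n^11*M^5) + (-1977454080*n^11*M^6) + (134220240*n^11*M^7) + (-163296*n^11*M^8) + (-568693725*n^12*M^3) + (1871846508*n^12*M^4) + (2037175812*n^12*M^5) + (-897175440*n^12*M^6) + (18552240*n^12*M^7) + (-693173415*n^13*M^3) + (-197226708*n^13*M^4) + (1831771368*n^13*M^5) + (-243991440*n^13*M^6) + (1406160*n^13*M^7) + (-315969969*n^14*M^3) + (-1167553590*n^14*M^4) + (858046392*n^14*M^5) + (-42094080*n^14*M^6) + (45360*n^14*M^7) + (122601945*n^15*M^3) + (-962113110*n^15*M^4) + (257159448*n^15*M^5) + (-4536000*n^15*M^6) + (286026519*n^16*M^3)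 + (-459213720*n^16*M^4) + (51923592*n^16*M^5) + (-279720*n^16*M^6) + (219911925*n^17*M^3) + (-147812280*n^17*M^4) + (7070868*n^17*M^5) + (-7560*n^17*M^6) + (106106115*n^18*M^3) + (-33558630*n^18*M^4) + (625212*n^18*M^5) + (36044775*n^19*M^3) + (-5415270*n^19*M^4) + (32508*n^19*M^5) + (8958105*n^20*M^3) + (-610260*n^20*M^4) + (756*n^20*M^5) + (1645275*n^21*M^3) + (-45780*n^21*M^4) + (221565*n^22*M^3) + (-2058*n^22*M^4) + (21315*n^23*M^3) + (-42*n^23*M^4) + (1389*n^24*M^3) + (55*n^25*M^3) + (1*n^26*M^3)) rfl)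
  simpa using this
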